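/- Let F be a field, L = F[z₁,z₁⁻¹,...,z_n,z_n⁻¹], and C a bounded chain complex of finitely generated projective L-modules such that every homology group H_k(C) is finite-dimensional over F. Then for each j, the complex C ⊗_{F[z_j,z_j⁻¹]} F(z_j) is acyclic, where F(z_j) is the field of rational functions. -/

import Mathlib

open CategoryTheory LaurentPolynomial

/-- The canonical ring homomorphism `F[z,z⁻¹] → F(z)` sending `z` to `X`. -/
noncomputable def laurentToRatFunc (F : Type) [Field F] :
    LaurentPolynomial F →+* RatFunc F :=
  ((AddMonoidAlgebra.lift F (RatFunc F) ℤ)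
    ((Units.coeHom (RatFunc F)).comp
      (zpowersHom (RatFunc F)ˣ (Units.mk0 (RatFunc.X) RatFunc.X_ne_zero)))).toRingHom

/-- The ring homomorphism `F[z_j,z_j⁻¹] → F[z₁,z₁⁻¹,...,z_n,z_n⁻¹]` sending `z` to `z_j`,
where the multivariate Laurent polynomial ring is `AddMonoidAlgebra F (Fin n → ℤ)`. -/
noncomputable def laurentVar (F : Type) [Field F] (n : ℕ) (j : Fin n) :
    LaurentPolynomial F →+* AddMonoidAlgebra F (Fin n → ℤ) :=
  AddMonoidAlgebra.mapDomainRingHom F (AddMonoidHom.single (fun _ : Fin n => ℤ) j)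

/-
Multiplication by `z_j` is an endomorphism of the finite-dimensional `F`-space `H_k(C)`, so by
Cayley–Hamilton some monic `p` has `p(z_j) • H_k(C) = 0`: `p(z_j)` times a cycle is a boundary.
The field `F(z)` is the fraction field of `F[z,z⁻¹]`, hence flat over it, so every cycle of
`F(z) ⊗ C` comes from `F(z) ⊗ Z_k(C)`. There `s ⊗ c = p(z)⁻¹s ⊗ p(z_j)c` since `p(z) ≠ 0`
in `F(z)`, and `p(z_j)c` is a boundary.
-/

open Polynomial

theorem AlgHom.apply_toLaurent {R A : Type*} [CommSemiring R] [Semiring A] [Algebra R A]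
    (g : R[T;T⁻¹] →ₐ[R] A) (p : R[X]) : g (toLaurent p) = aeval (g (T 1)) p := by
  simpa using (aeval_algHom_apply (g.comp toLaurentAlg) X p).symm

theorem laurentVar_toLaurent (F : Type) [Field F] (n : ℕ) (j : Fin n) (p : F[X]) :
    laurentVar F n j (toLaurent p) = aeval (laurentVar F n j (T 1)) p :=
  (AddMonoidAlgebra.mapDomainAlgHom F F
    (AddMonoidHom.single (fun _ : Fin n => ℤ) j)).apply_toLaurent p

theorem laurentToRatFunc_T_one (F : Type) [Field F] : laurentToRatFunc F (T 1) = RatFunc.X := by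
  change AddMonoidAlgebra.lift F (RatFunc F) ℤ _ (AddMonoidAlgebra.single 1 1) = _
  rw [AddMonoidAlgebra.lift_single]
  simp

theorem laurentToRatFunc_toLaurent (F : Type) [Field F] (p : F[X]) :
    laurentToRatFunc F (toLaurent p) = algebraMap F[X] (RatFunc F) p := by
  rw [← RatFunc.aeval_X_left_eq_algebraMap, ← laurentToRatFunc_T_one]
  exact AlgHom.apply_toLaurent _ p

noncomputable instance (F : Type) [Field F] : Algebra F[T;T⁻¹] (RatFunc F) :=
  (laurentToRatFunc F).toAlgebra

instance (F : Type) [Field F] : IsScalarTower F[X] F[T;T⁻¹] (RatFunc F) :=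
  .of_algebraMap_eq fun p => (laurentToRatFunc_toLaurent F p).symm

instance (F : Type) [Field F] : IsFractionRing F[T;T⁻¹] (RatFunc F) :=
  IsFractionRing.isFractionRing_of_isDomain_of_isLocalization (Submonoid.powers (X : F[X])) _ _

theorem RestrictScalars.exists_monic_forall_aeval_smul_eq_zero (R : Type*) {A M : Type*}
    [CommRing R] [Ring A] [Algebra R A] [AddCommGroup M] [Module A M]
    (hM : Module.Finite R (RestrictScalars R A M)) (a : A) :
    ∃ p : R[X], p.Monic ∧ ∀ m : M, aeval a p • m = 0 := by
  -- `RestrictScalars` gets its additive monoid structure along two instance paths that are not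
  -- reducibly equal; `Module.End.isIntegral` needs the one through `AddCommGroup`.
  let _ : @Module R (RestrictScalars R A M) _ AddCommGroup.toAddCommMonoid :=
    RestrictScalars.module R A M
  have : @Module.Finite R (RestrictScalars R A M) _ AddCommGroup.toAddCommMonoid _ := hM
  obtain ⟨p, hp, hpa⟩ := (Module.End.isIntegral (M := RestrictScalars R A M)).isIntegral
    (RestrictScalars.lsmul R A M a)
  have hlsmul : RestrictScalars.lsmul R A M (aeval a p) = 0 := by
    rw [← aeval_algHom_apply]; exact hpa
  exact ⟨p, hp, LinearMap.congr_fun hlsmul⟩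

theorem CategoryTheory.ShortComplex.moduleCat_smul_mem_range_f {R : Type*} [Ring R]
    (S : ShortComplex (ModuleCat R)) (a : R) (ha : ∀ h : S.homology, a • h = 0)
    (x : S.X₂) (hx : S.g x = 0) : a • x ∈ LinearMap.range S.f.hom := by
  let e := S.moduleCatHomologyIso.toLinearEquiv
  have hH : ∀ z : S.moduleCatLeftHomologyData.H, a • z = 0 := fun z => by
    simpa [e] using congrArg e (ha (e.symm z))
  have hclass :
      a • Submodule.Quotient.mk (p := LinearMap.range S.moduleCatToCycles) ⟨x, hx⟩ = 0 := hH _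
  rw [← Submodule.Quotient.mk_smul, Submodule.Quotient.mk_eq_zero] at hclass
  obtain ⟨y, hy⟩ := hclass
  exact ⟨y, congrArg Subtype.val hy⟩

theorem LinearMap.ker_lTensor_le_range_lTensor_of_smul {B K X₁ X₂ X₃ : Type*} [CommRing B]
    [AddCommGroup K] [Module B K] [Module.Flat B K] [AddCommGroup X₁] [Module B X₁]
    [AddCommGroup X₂] [Module B X₂] [AddCommGroup X₃] [Module B X₃]
    (f : X₁ →ₗ[B] X₂) (g : X₂ →ₗ[B] X₃) (q : B) (hq : Function.Surjective (q • · : K → K))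
    (hfg : ∀ x, g x = 0 → q • x ∈ range f) : ker (g.lTensor K) ≤ range (f.lTensor K) := by
  intro t ht
  obtain ⟨s, rfl⟩ := (Module.Flat.lTensor_exact K (LinearMap.exact_subtype_ker_map g) t).mp ht
  clear ht
  induction s using TensorProduct.induction_on with
  | zero => simp
  | tmul k x =>
    obtain ⟨k', rfl⟩ := hq k
    obtain ⟨y, hy⟩ := hfg x x.2
    exact ⟨k' ⊗ₜ y, by simp [hy, TensorProduct.smul_tmul]⟩
  | add s₁ s₂ h₁ h₂ => simpa only [map_add] using add_mem h₁ h₂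

theorem ModuleCat.ExtendScalars.map_apply {R S : Type*} [CommRing R] [CommRing S] (f : R →+* S)
    {M N : ModuleCat R} (u : M ⟶ N) (x : (extendScalars f).obj M) :
    (extendScalars f).map u x = LinearMap.lTensor _ u.hom x := by
  induction x using TensorProduct.induction_on with
  | zero => exact map_zero ((extendScalars f).map u).hom
  | tmul s m => rfl
  | add x y hx hy =>
    exact (map_add ((extendScalars f).map u).hom x y).trans
      ((congrArg₂ (· + ·) hx hy).trans (map_add _ x y).symm)

theorem stmt15 (F : Type) [Field F] (n : ℕ)
    (C : ChainComplex (ModuleCat (AddMonoidAlgebra F (Fin n → ℤ))) ℤ)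
    (hfd : ∀ k : ℤ, Module.Finite F
      (RestrictScalars F (AddMonoidAlgebra F (Fin n → ℤ)) (C.homology k))) :
    ∀ j : Fin n, ∀ k : ℤ,
      ((((ModuleCat.restrictScalars (laurentVar F n j) ⋙
        ModuleCat.extendScalars (laurentToRatFunc F)).mapHomologicalComplex
          (ComplexShape.down ℤ)).obj C).ExactAt k) := by
  intro j k
  obtain ⟨p, hp, hann⟩ := RestrictScalars.exists_monic_forall_aeval_smul_eq_zero F
    (hfd k) (laurentVar F n j (T 1))
  let K := (ModuleCat.restrictScalars (laurentToRatFunc F)).obj (.of _ (RatFunc F))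
  have : Module.Flat F[T;T⁻¹] K := IsLocalization.flat (RatFunc F) (nonZeroDivisors F[T;T⁻¹])
  have hsurj : Function.Surjective (toLaurent p • · : K → K) := by
    have hne : laurentToRatFunc F (toLaurent p) ≠ 0 := by
      rw [laurentToRatFunc_toLaurent]
      exact RatFunc.algebraMap_ne_zero hp.ne_zero
    intro (y : RatFunc F)
    exact ⟨(laurentToRatFunc F (toLaurent p))⁻¹ * y, mul_inv_cancel_left₀ hne y⟩
  have hcycles : ∀ x, (C.sc k).g x = 0 →
      laurentVar F n j (toLaurent p) • x ∈ LinearMap.range (C.sc k).f.hom := by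
    rw [laurentVar_toLaurent]
    exact (C.sc k).moduleCat_smul_mem_range_f _ hann
  rw [HomologicalComplex.exactAt_iff, ShortComplex.moduleCat_exact_iff]
  intro x hx
  obtain ⟨y, hy⟩ := LinearMap.ker_lTensor_le_range_lTensor_of_smul
    ((ModuleCat.restrictScalars (laurentVar F n j)).map (C.sc k).f).hom
    ((ModuleCat.restrictScalars (laurentVar F n j)).map (C.sc k).g).hom _ hsurj hcycles
    (x := x) ((ModuleCat.ExtendScalars.map_apply _ _ x).symm.trans hx)
  exact ⟨y, (ModuleCat.ExtendScalars.map_apply _ _ y).trans hy⟩
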